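/- Let M be a real symmetric n×n matrix with n ≥ 3 and T a set of indices of size at least 2 such that e_u - e_v is an eigenvector of M (for a common eigenvalue) for all distinct u, v ∈ T. Then for all distinct u, v ∈ T and all real t, |U(t)_{u,v}|² ≤ 1/(|T| - 1), and the inequality is strict when |T| ≥ 3. -/

import Mathlib

/-!
Since `e_a - e_b` is a `θ`-eigenvector of `M`, it is an `e^{itθ}`-eigenvector of the unitary
`U(t)`. Reading row `u` of these eigen-equations, all entries `U(t)_{u,w}` with `w ∈ T \ {u}`
coincide and `U(t)_{u,u} - U(t)_{u,v} = e^{itθ}` has modulus one. As rows of a unitary matrix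
are unit vectors, `|U_{u,u}|² + (|T| - 1) |U_{u,v}|² ≤ 1`. Equality in the bound would force
`U_{u,u} = 0`, hence `|U_{u,v}| = 1`, which is impossible once `|T| ≥ 3`.
-/

open Matrix Complex

/-- The continuous-time quantum walk transition matrix `U(t) = exp(i t M)`. -/
noncomputable def transU {n : ℕ} (M : Matrix (Fin n) (Fin n) ℝ) (t : ℝ) :
    Matrix (Fin n) (Fin n) ℂ :=
  NormedSpace.exp ((Complex.I * (t : ℂ)) • M.map (fun x => (x : ℂ)))

theorem sq_norm_lt_inv_of_norm_sub_eq_one {E : Type*} [SeminormedAddGroup E] {a b : E} {k : ℝ}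
    (hk : 1 < k) (hab : ‖a - b‖ = 1) (h : ‖a‖ ^ 2 + k * ‖b‖ ^ 2 ≤ 1) : ‖b‖ ^ 2 < 1 / k := by
  rw [lt_div_iff₀ (by linarith)]
  by_contra! hb
  have ha : ‖a‖ = 0 := by nlinarith [norm_nonneg a]
  have : 1 ≤ ‖b‖ ^ 2 := one_le_pow₀ (by linarith [norm_sub_le a b])
  nlinarith

open NormedSpace

namespace Matrix

variable {ι 𝕜 : Type*} [Fintype ι] [DecidableEq ι] [RCLike 𝕜]

theorem exp_mulVec_of_mulVec_eq_smul {A : Matrix ι ι 𝕜} {x : ι → 𝕜} {c : 𝕜}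
    (h : A *ᵥ x = c • x) : exp A *ᵥ x = exp c • x := by
  let _ : NormedRing (Matrix ι ι 𝕜) := Matrix.linftyOpNormedRing
  let _ : NormedAlgebra 𝕜 (Matrix ι ι 𝕜) := Matrix.linftyOpNormedAlgebra
  -- stated for the norm's uniformity, which is not syntactically the product uniformity
  have : @CompleteSpace (Matrix ι ι 𝕜) PseudoMetricSpace.toUniformSpace :=
    FiniteDimensional.complete 𝕜 _
  have hpow (k : ℕ) : A ^ k *ᵥ x = c ^ k • x := by
    induction k with
    | zero => simp
    | succ k ih => rw [pow_succ', ← mulVec_mulVec, ih, mulVec_smul, h, smul_smul, pow_succ]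
  have hA := (expSeries_hasSum_exp (𝕂 := 𝕜) A).map (mulVec.addMonoidHomLeft x)
    (continuous_id.matrix_mulVec continuous_const)
  have hc := (expSeries_hasSum_exp (𝕂 := 𝕜) c).smul_const x
  simp only [expSeries_apply_eq, Function.comp_def, mulVec.addMonoidHomLeft, AddMonoidHom.coe_mk,
    ZeroHom.coe_mk, smul_mulVec, hpow, smul_smul] at hA hc
  exact hA.unique hc

theorem exp_mem_unitaryGroup_of_mem_skewAdjoint {A : Matrix ι ι 𝕜} (hA : A ∈ skewAdjoint _) :
    exp A ∈ unitaryGroup ι 𝕜 := by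
  rw [mem_unitaryGroup_iff, star_eq_conjTranspose, ← exp_conjTranspose,
    ← star_eq_conjTranspose, skewAdjoint.mem_iff.mp hA,
    ← exp_add_of_commute _ _ (Commute.refl A).neg_right, add_neg_cancel, NormedSpace.exp_zero]

theorem sum_sq_norm_apply_eq_one_of_mem_unitaryGroup {U : Matrix ι ι 𝕜}
    (hU : U ∈ unitaryGroup ι 𝕜) (i : ι) : ∑ j, ‖U i j‖ ^ 2 = 1 := by
  have h := congrFun (congrFun (mem_unitaryGroup_iff.mp hU) i) i
  simp only [mul_apply, star_apply, one_apply_eq, RCLike.star_def, RCLike.mul_conj] at h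
  exact_mod_cast h

section Twin

variable {R : Type*} [Ring R]

theorem mulVec_single_sub_single_apply (U : Matrix ι ι R) (i a b : ι) :
    (U *ᵥ (Pi.single a 1 - Pi.single b 1)) i = U i a - U i b := by
  simp [mulVec_sub, mulVec_single]

theorem apply_eq_apply_of_mulVec_single_sub_single {U : Matrix ι ι R} {e : R}
    {i a b : ι} (h : U *ᵥ (Pi.single a 1 - Pi.single b 1) = e • (Pi.single a 1 - Pi.single b 1))
    (ha : i ≠ a) (hb : i ≠ b) : U i a = U i b := by
  have := congrFun h i
  rw [mulVec_single_sub_single_apply] at this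
  simpa [ha, hb, sub_eq_zero] using this

theorem apply_self_sub_apply_of_mulVec_single_sub_single {U : Matrix ι ι R} {e : R}
    {i b : ι} (h : U *ᵥ (Pi.single i 1 - Pi.single b 1) = e • (Pi.single i 1 - Pi.single b 1))
    (hb : i ≠ b) : U i i - U i b = e := by
  have := congrFun h i
  rw [mulVec_single_sub_single_apply] at this
  simpa [hb] using this

variable {U : Matrix ι ι 𝕜} {T : Finset ι} {e : 𝕜} {u v : ι}

theorem sq_norm_apply_self_add_mul_sq_norm_apply_le_one (hU : U ∈ unitaryGroup ι 𝕜)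
    (htwin : ∀ a ∈ T, ∀ b ∈ T, a ≠ b →
      U *ᵥ (Pi.single a 1 - Pi.single b 1) = e • (Pi.single a 1 - Pi.single b 1))
    (hu : u ∈ T) (hv : v ∈ T) (huv : u ≠ v) :
    ‖U u u‖ ^ 2 + ((T.card : ℝ) - 1) * ‖U u v‖ ^ 2 ≤ 1 := by
  have hrow : ∀ w ∈ T.erase u, ‖U u w‖ ^ 2 = ‖U u v‖ ^ 2 := by
    intro w hw
    obtain ⟨hwu, hw⟩ := Finset.mem_erase.mp hw
    rcases eq_or_ne w v with rfl | hwv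
    · rfl
    · rw [apply_eq_apply_of_mulVec_single_sub_single (htwin w hw v hv hwv) hwu.symm huv]
  calc ‖U u u‖ ^ 2 + ((T.card : ℝ) - 1) * ‖U u v‖ ^ 2 = ∑ w ∈ T, ‖U u w‖ ^ 2 := by
        rw [← Finset.add_sum_erase T _ hu, Finset.sum_congr rfl hrow, Finset.sum_const,
          Finset.card_erase_of_mem hu, nsmul_eq_mul, Nat.cast_pred (Finset.card_pos.mpr ⟨u, hu⟩)]
    _ ≤ ∑ w, ‖U u w‖ ^ 2 := Finset.sum_le_univ_sum_of_nonneg fun _ => by positivity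
    _ = 1 := sum_sq_norm_apply_eq_one_of_mem_unitaryGroup hU u

theorem sq_norm_apply_le_of_twin (hU : U ∈ unitaryGroup ι 𝕜) (he : ‖e‖ = 1)
    (htwin : ∀ a ∈ T, ∀ b ∈ T, a ≠ b →
      U *ᵥ (Pi.single a 1 - Pi.single b 1) = e • (Pi.single a 1 - Pi.single b 1))
    (hu : u ∈ T) (hv : v ∈ T) (huv : u ≠ v) :
    ‖U u v‖ ^ 2 ≤ 1 / ((T.card : ℝ) - 1) ∧
      (3 ≤ T.card → ‖U u v‖ ^ 2 < 1 / ((T.card : ℝ) - 1)) := by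
  have hrow := sq_norm_apply_self_add_mul_sq_norm_apply_le_one hU htwin hu hv huv
  have hcard : (2 : ℝ) ≤ T.card := by
    exact_mod_cast Finset.one_lt_card.mpr ⟨u, hu, v, hv, huv⟩
  refine ⟨?_, fun h3 => sq_norm_lt_inv_of_norm_sub_eq_one ?_ ?_ hrow⟩
  · rw [le_div_iff₀ (by linarith)]
    nlinarith [sq_nonneg ‖U u u‖]
  · have : (3 : ℝ) ≤ T.card := by exact_mod_cast h3
    linarith
  · rw [apply_self_sub_apply_of_mulVec_single_sub_single (htwin u hu v hv huv) huv, he]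

end Twin

end Matrix

theorem transU_mem_unitaryGroup {n : ℕ} {M : Matrix (Fin n) (Fin n) ℝ} (hM : M.IsSymm) (t : ℝ) :
    transU M t ∈ unitaryGroup (Fin n) ℂ := by
  refine exp_mem_unitaryGroup_of_mem_skewAdjoint (IsSelfAdjoint.smul_mem_skewAdjoint ?_ ?_)
  · rw [skewAdjoint.mem_iff]
    simp
  · exact ((isHermitian_iff_isSymm.mpr hM).map _ fun x => (conj_ofReal x).symm).isSelfAdjoint

theorem transU_mulVec_of_mulVec_eq_smul {n : ℕ} {M : Matrix (Fin n) (Fin n) ℝ} {x : Fin n → ℝ}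
    {θ : ℝ} (h : M *ᵥ x = θ • x) (t : ℝ) :
    transU M t *ᵥ (ofReal ∘ x) = cexp ((t * θ : ℝ) * I) • (ofReal ∘ x) := by
  have hx : M.map (fun x => (x : ℂ)) *ᵥ (ofReal ∘ x) = (θ : ℂ) • (ofReal ∘ x) := by
    ext i
    have := (RingHom.map_mulVec ofRealHom M x i).symm
    simp only [h, Pi.smul_apply, smul_eq_mul, ofRealHom_eq_coe, ofReal_mul] at this
    exact this
  rw [transU, exp_mulVec_of_mulVec_eq_smul (by rw [smul_mulVec, hx, smul_smul]), ← exp_eq_exp_ℂ]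
  congr 2
  push_cast
  ring

theorem stmt4_general {n : ℕ} (M : Matrix (Fin n) (Fin n) ℝ) (hM : M.IsSymm)
    (T : Finset (Fin n)) (θ : ℝ)
    (htwin : ∀ u ∈ T, ∀ v ∈ T, u ≠ v →
      M *ᵥ (Pi.single u 1 - Pi.single v 1) = θ • (Pi.single u 1 - Pi.single v 1)) :
    ∀ u ∈ T, ∀ v ∈ T, u ≠ v → ∀ t : ℝ,
      ‖transU M t u v‖ ^ 2 ≤ 1 / ((T.card : ℝ) - 1) ∧
      (3 ≤ T.card → ‖transU M t u v‖ ^ 2 < 1 / ((T.card : ℝ) - 1)) := by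
  intro u hu v hv huv t
  refine sq_norm_apply_le_of_twin (transU_mem_unitaryGroup hM t) (norm_exp_ofReal_mul_I (t * θ))
    (fun a ha b hb hab => ?_) hu hv huv
  have hcast :
      ofReal ∘ (Pi.single a 1 - Pi.single b 1 : Fin n → ℝ) = Pi.single a 1 - Pi.single b 1 := by
    ext i
    simp only [Function.comp_apply, Pi.sub_apply, Pi.single_apply]
    split_ifs <;> simp
  simpa only [hcast] using transU_mulVec_of_mulVec_eq_smul (htwin a ha b hb hab) t

theorem stmt4 {n : ℕ} (hn : 3 ≤ n) (M : Matrix (Fin n) (Fin n) ℝ) (hM : M.IsSymm)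
    (T : Finset (Fin n)) (hT : 2 ≤ T.card) (θ : ℝ)
    (htwin : ∀ u ∈ T, ∀ v ∈ T, u ≠ v →
      M *ᵥ (Pi.single u 1 - Pi.single v 1) = θ • (Pi.single u 1 - Pi.single v 1)) :
    ∀ u ∈ T, ∀ v ∈ T, u ≠ v → ∀ t : ℝ,
      ‖transU M t u v‖ ^ 2 ≤ 1 / ((T.card : ℝ) - 1) ∧
      (3 ≤ T.card → ‖transU M t u v‖ ^ 2 < 1 / ((T.card : ℝ) - 1)) :=
  stmt4_general M hM T θ htwin
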